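/- arXiv:1901.01398 — 2 statements merged into one kernel-verified Lean document; each statement's English description precedes it below -/
import Mathlib

section
/- A monomial z^α = z_1^{α_1}⋯z_n^{α_n} belongs to the integral closure of a monomial ideal M ⊆ ℂ[z_1,…,z_n] if and only if the exponent vector α lies in the Newton polyhedron of M, i.e., in the convex hull in ℝ^n of the set of exponent vectors of monomials in M. -/
open MvPolynomial

noncomputable section

/-- The polynomial ring ℂ[z_1,…,z_n]. -/
abbrev MPoly (n : ℕ) : Type := MvPolynomial (Fin n) ℂ

/-- The monomial z^β = z_1^{β_1} ⋯ z_n^{β_n}. -/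
def monom {n : ℕ} (β : Fin n → ℕ) : MPoly n := ∏ i, X i ^ β i

/-- `g` belongs to the integral closure of the ideal `I`:
it satisfies a monic equation g^q + h_1 g^{q-1} + ⋯ + h_q = 0 with h_k ∈ I^k. -/
def memIntClosure {R : Type*} [CommRing R] (I : Ideal R) (g : R) : Prop :=
  ∃ q : ℕ, 0 < q ∧ ∃ h : Fin q → R, (∀ k, h k ∈ I ^ (k.1 + 1)) ∧
    g ^ q + ∑ k, h k * g ^ (q - 1 - k.1) = 0

namespace NPaux

variable {n : ℕ}

/-- exponent vector as a finsupp -/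
def e (β : Fin n → ℕ) : Fin n →₀ ℕ := Finsupp.equivFunOnFinite.symm β

@[simp] lemma e_apply (β : Fin n → ℕ) (i : Fin n) : e β i = β i := rfl

lemma e_add (β γ : Fin n → ℕ) : e (β + γ) = e β + e γ := by
  ext i; simp

lemma monom_eq (β : Fin n → ℕ) : monom β = monomial (e β) (1 : ℂ) := by
  rw [monomial_eq, C_1, one_mul, Finsupp.prod_fintype]
  · rfl
  · intro i; exact pow_zero _

lemma monom_add (β γ : Fin n → ℕ) : monom (β + γ) = monom β * monom γ := by
  simp only [monom_eq, e_add, monomial_mul, one_mul]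

lemma monom_pow (β : Fin n → ℕ) (q : ℕ) : monom β ^ q = monom (q • β) := by
  induction q with
  | zero => simp [monom]
  | succ m ih =>
      rw [pow_succ, ih, ← monom_add, succ_nsmul]

/-- membership of a monomial in the monomial ideal -/
lemma monom_mem_iff {G : Set (Fin n → ℕ)} (β : Fin n → ℕ) :
    monom β ∈ Ideal.span ((fun β => monom β) '' G) ↔ ∃ γ ∈ G, ∀ i, γ i ≤ β i := by
  have himg : ((fun β => monom β) '' G : Set (MPoly n))
      = (fun s => monomial s (1 : ℂ)) '' (e '' G) := by
    rw [Set.image_image]; exact Set.image_congr fun β _ => monom_eq β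
  rw [himg, monom_eq, mem_ideal_span_monomial_image]
  constructor
  · intro h
    obtain ⟨s, hs, hle⟩ := h (e β) (by
      rw [mem_support_iff, coeff_monomial, if_pos rfl]; exact one_ne_zero)
    obtain ⟨γ, hγG, rfl⟩ := hs
    exact ⟨γ, hγG, fun i => by simpa using hle i⟩
  · intro ⟨γ, hγG, hle⟩ xi hxi
    rw [support_monomial, if_neg one_ne_zero, Finset.mem_singleton] at hxi
    subst hxi
    exact ⟨e γ, ⟨γ, hγG, rfl⟩, fun i => by simpa using hle i⟩

/-- The combinatorial witness predicate: some positive multiple `qα` of `α`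
dominates a sum of `q` exponent vectors from `G`. -/
def Witness (G : Set (Fin n → ℕ)) (α : Fin n → ℕ) : Prop :=
  ∃ T : Multiset (Fin n → ℕ), T ≠ 0 ∧ (∀ γ ∈ T, γ ∈ G) ∧
    ∀ i, ((T.map fun γ => γ i).sum : ℕ) ≤ Multiset.card T * α i

section Alg

variable (G : Set (Fin n → ℕ))

open Pointwise

/-- products of members of M lie in powers of M -/
lemma prod_mem_pow (M : Ideal (MPoly n)) (T : Multiset (MPoly n))
    (hT : ∀ p ∈ T, p ∈ M) : T.prod ∈ M ^ Multiset.card T := by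
  induction T using Multiset.induction with
  | empty => simp [Ideal.one_eq_top]
  | cons a s ih =>
      rw [Multiset.prod_cons, Multiset.card_cons, pow_succ, mul_comm (M ^ _) M]
      exact Ideal.mul_mem_mul (hT a (Multiset.mem_cons_self a s))
        (ih fun p hp => hT p (Multiset.mem_cons_of_mem hp))

lemma prod_monom (T : Multiset (Fin n → ℕ)) :
    (T.map fun γ => monom γ).prod = monom (fun i => (T.map fun γ => γ i).sum) := by
  induction T using Multiset.induction with
  | empty => simp [monom]
  | cons a s ih =>
      simp only [Multiset.map_cons, Multiset.prod_cons, Multiset.sum_cons, ih, ← monom_add]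
      rfl

/-- combinatorial witness implies the monic integral equation -/
lemma witness_to_alg (M : Ideal (MPoly n))
    (hM : M = Ideal.span ((fun β => monom β) '' G)) (α : Fin n → ℕ)
    (h : Witness G α) : memIntClosure M (monom α) := by
  classical
  obtain ⟨T, hT0, hTG, hle⟩ := h
  set q := Multiset.card T with hq
  have hqpos : 0 < q := Multiset.card_pos.2 hT0
  set g := monom α with hgdef
  -- the key power membership
  have hg : g ^ q ∈ M ^ q := by
    have hprod : (T.map fun γ => monom γ).prod ∈ M ^ q := by
      have := prod_mem_pow M (T.map fun γ => monom γ) ?_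
      · simpa [Multiset.card_map] using this
      · intro p hp
        obtain ⟨γ, hγT, rfl⟩ := Multiset.mem_map.1 hp
        rw [hM]
        exact Ideal.subset_span ⟨γ, hTG γ hγT, rfl⟩
    have hsplit : g ^ q
        = (T.map fun γ => monom γ).prod *
          monom (fun i => q * α i - (T.map fun γ => γ i).sum) := by
      rw [hgdef, monom_pow, prod_monom, ← monom_add]
      congr 1
      funext i
      have := hle i
      simp only [Pi.add_apply, Pi.smul_apply, smul_eq_mul]
      generalize (T.map fun γ => γ i).sum = s at *
      omega
    rw [hsplit]
    exact Ideal.mul_mem_right _ _ hprod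
  refine ⟨q, hqpos, fun k => if k.1 = q - 1 then -(g ^ q) else 0, fun k => ?_, ?_⟩
  · by_cases hk : k.1 = q - 1
    · simp only [if_pos hk]
      have hkq : k.1 + 1 = q := by omega
      rw [hkq]; exact neg_mem hg
    · simp only [if_neg hk]; exact zero_mem _
  · have hmem : (⟨q - 1, by omega⟩ : Fin q) ∈ (Finset.univ : Finset (Fin q)) := Finset.mem_univ _
    rw [Finset.sum_eq_single_of_mem ⟨q - 1, by omega⟩ hmem]
    · simp
    · intro k _ hk
      simp only [if_neg (by simpa [Fin.ext_iff] using hk), zero_mul]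

lemma himg (G : Set (Fin n → ℕ)) : ((fun β => monom β) '' G : Set (MPoly n))
    = (fun s => monomial s (1 : ℂ)) '' (e '' G) := by
  rw [Set.image_image]; exact Set.image_congr fun β _ => monom_eq β

/-- sum of the exponent vectors of a multiset -/
def sumOf (T : Multiset (Fin n → ℕ)) : Fin n →₀ ℕ := e fun i => (T.map fun γ => γ i).sum

@[simp] lemma sumOf_apply (T : Multiset (Fin n → ℕ)) (i : Fin n) :
    sumOf T i = (T.map fun γ => γ i).sum := rfl

lemma sumOf_cons (γ : Fin n → ℕ) (T : Multiset (Fin n → ℕ)) :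
    sumOf (γ ::ₘ T) = sumOf T + e γ := by
  ext i; simp [Multiset.sum_cons, add_comm]

/-- exponents appearing in the m-th power of the monomial ideal -/
def Sset (G : Set (Fin n → ℕ)) (m : ℕ) : Set (Fin n →₀ ℕ) :=
  {s | ∃ T : Multiset (Fin n → ℕ), Multiset.card T = m ∧ (∀ γ ∈ T, γ ∈ G) ∧ s = sumOf T}

lemma pow_le_span (G : Set (Fin n → ℕ)) (m : ℕ) :
    Ideal.span ((fun β => monom β) '' G) ^ m
      ≤ Ideal.span ((fun s => monomial s (1 : ℂ)) '' Sset G m) := by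
  induction m with
  | zero =>
      rw [pow_zero, Ideal.one_eq_top]
      have h1 : (1 : MPoly n) ∈ Ideal.span ((fun s => monomial s (1 : ℂ)) '' Sset G 0) := by
        apply Ideal.subset_span
        refine ⟨0, ⟨0, by simp, by simp, ?_⟩, ?_⟩
        · ext i; simp
        · show (monomial (0 : Fin n →₀ ℕ)) (1:ℂ) = 1
          rw [monomial_zero', C_1]
      exact le_of_eq ((Ideal.eq_top_iff_one _).2 h1).symm
  | succ m ih =>
      rw [pow_succ]
      calc Ideal.span ((fun β => monom β) '' G) ^ m * Ideal.span ((fun β => monom β) '' G)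
          ≤ Ideal.span ((fun s => monomial s (1 : ℂ)) '' Sset G m) *
            Ideal.span ((fun s => monomial s (1 : ℂ)) '' (e '' G)) :=
            Ideal.mul_mono ih (le_of_eq (congrArg Ideal.span (himg G)))
        _ = Ideal.span (((fun s => monomial s (1 : ℂ)) '' Sset G m) *
              ((fun s => monomial s (1 : ℂ)) '' (e '' G))) := Ideal.span_mul_span' _ _
        _ ≤ Ideal.span ((fun s => monomial s (1 : ℂ)) '' Sset G (m + 1)) := by
            apply Ideal.span_mono
            rintro x hx
            rw [Set.mem_mul] at hx
            obtain ⟨a, ha, b, hb, rfl⟩ := hx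
            obtain ⟨s, ⟨T, hTc, hTG, rfl⟩, rfl⟩ := ha
            obtain ⟨t, ⟨γ, hγG, rfl⟩, rfl⟩ := hb
            refine ⟨sumOf T + e γ, ⟨γ ::ₘ T, ?_, ?_, (sumOf_cons γ T).symm⟩, ?_⟩
            · simp [hTc]
            · intro δ hδ
              rcases Multiset.mem_cons.1 hδ with h | h
              · exact h ▸ hγG
              · exact hTG δ h
            · rw [monomial_mul, one_mul]

lemma alg_to_witness (G : Set (Fin n → ℕ)) (M : Ideal (MPoly n))
    (hM : M = Ideal.span ((fun β => monom β) '' G)) (α : Fin n → ℕ)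
    (h : memIntClosure M (monom α)) : Witness G α := by
  classical
  obtain ⟨q, hq, h, hmem, heq⟩ := h
  set g := monom α with hgdef
  have hpow : ∀ m : ℕ, g ^ m = monomial (e (m • α)) (1 : ℂ) := fun m => by
    rw [hgdef, monom_pow, monom_eq]
  set c : Fin n →₀ ℕ := e (q • α) with hc
  have hsum : coeff c (∑ k : Fin q, h k * g ^ (q - 1 - k.1)) ≠ 0 := by
    have : (∑ k : Fin q, h k * g ^ (q - 1 - k.1)) = -(g ^ q) := by
      rw [← sub_eq_zero, sub_neg_eq_add, add_comm]; exact heq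
    rw [this, coeff_neg, hpow q, coeff_monomial, if_pos rfl]
    simp
  rw [coeff_sum] at hsum
  obtain ⟨k, _, hk⟩ := Finset.exists_ne_zero_of_sum_ne_zero hsum
  rw [hpow, coeff_mul_monomial'] at hk
  have hle : e ((q - 1 - k.1) • α) ≤ c := by
    by_contra hcon
    rw [if_neg hcon] at hk; exact hk rfl
  rw [if_pos hle, mul_one] at hk
  have hsub : c - e ((q - 1 - k.1) • α) = e ((k.1 + 1) • α) := by
    ext i
    rw [Finsupp.tsub_apply]
    have hkq : k.1 < q := k.2
    simp only [hc, e_apply, Pi.smul_apply, smul_eq_mul]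
    rw [← Nat.sub_mul]
    congr 1
    omega
  rw [hsub] at hk
  have hspan := (hM ▸ pow_le_span G (k.1 + 1)) (hmem k)
  rw [mem_ideal_span_monomial_image] at hspan
  obtain ⟨s, ⟨T, hTc, hTG, rfl⟩, hsle⟩ := hspan _ (mem_support_iff.2 hk)
  refine ⟨T, ?_, hTG, fun i => ?_⟩
  · intro h0; rw [h0] at hTc; simp at hTc
  · have := (Finsupp.le_def.1 hsle) i
    simpa [hTc] using this

end Alg

section Conv

open Pointwise

lemma msum_apply (T : Multiset (Fin n → ℕ)) (i : Fin n) :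
    T.sum i = (T.map fun γ => γ i).sum := by
  induction T using Multiset.induction with
  | empty => rfl
  | cons a s ih => simp [Multiset.sum_cons, ih]

lemma witness_to_conv (G : Set (Fin n → ℕ)) (M : Ideal (MPoly n))
    (hmm : ∀ β : Fin n → ℕ, (∃ γ ∈ G, ∀ i, γ i ≤ β i) → monom β ∈ M)
    (α : Fin n → ℕ)
    (T : Multiset (Fin n → ℕ)) (hT0 : T ≠ 0) (hTG : ∀ γ ∈ T, γ ∈ G)
    (hle : ∀ i, ((T.map fun γ => γ i).sum : ℕ) ≤ Multiset.card T * α i) :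
    (fun i => (α i : ℝ)) ∈
      convexHull ℝ {x : Fin n → ℝ | ∃ β : Fin n → ℕ, monom β ∈ M ∧ x = fun i => (β i : ℝ)} := by
  classical
  obtain ⟨γ₀, hγ₀⟩ := Multiset.exists_mem_of_ne_zero hT0
  obtain ⟨T', rfl⟩ := Multiset.exists_cons_of_mem hγ₀
  set q := Multiset.card (γ₀ ::ₘ T') with hq
  have hqpos : 0 < q := by simp [hq]
  set δ : Fin n → ℕ := fun i => q * α i - ((γ₀ ::ₘ T').map fun γ => γ i).sum with hδ
  set T₂ : Multiset (Fin n → ℕ) := (γ₀ + δ) ::ₘ T' with hT₂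
  have hcard₂ : Multiset.card T₂ = q := by simp [hT₂, hq]
  have hmem₂ : ∀ β ∈ T₂, monom β ∈ M := by
    intro β hβ
    rcases Multiset.mem_cons.1 hβ with h | h
    · exact hmm β ⟨γ₀, hTG γ₀ hγ₀, fun i => by simp [h]⟩
    · exact hmm β ⟨β, hTG β (Multiset.mem_cons_of_mem h), fun i => le_rfl⟩
  have hsum₂ : ∀ i, ((T₂.map fun γ => γ i).sum : ℕ) = q * α i := by
    intro i
    have h1 := hle i
    simp only [hT₂, Multiset.map_cons, Multiset.sum_cons, Pi.add_apply] at h1 ⊢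
    simp only [hδ, Multiset.map_cons, Multiset.sum_cons]
    generalize (Multiset.map (fun γ => γ i) T').sum = s at *
    omega
  -- pass to the list
  set L := T₂.toList with hL
  have hLlen : L.length = q := by rw [hL, Multiset.length_toList, hcard₂]
  set z : Fin L.length → Fin n → ℝ := fun j => fun i => ((L.get j) i : ℝ) with hz
  have hcm : (Finset.univ : Finset (Fin L.length)).centerMass (fun _ => (1 : ℝ)) z ∈
      convexHull ℝ {x : Fin n → ℝ | ∃ β : Fin n → ℕ, monom β ∈ M ∧ x = fun i => (β i : ℝ)} :=
    Finset.centerMass_mem_convexHull (Finset.univ : Finset (Fin L.length))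
    (fun _ _ => zero_le_one)
    (by
      simp only [Finset.sum_const, Finset.card_univ, Fintype.card_fin, nsmul_eq_mul, mul_one]
      exact_mod_cast Nat.cast_pos.2 (hLlen ▸ hqpos))
    (by
      intro j _
      refine ⟨L.get j, hmem₂ _ ?_, rfl⟩
      rw [← Multiset.mem_toList]
      exact L.get_mem j)
  have hgs : ∑ j : Fin L.length, L.get j = T₂.sum := by
    simpa using Fin.sum_univ_getElem L ▸ (Multiset.sum_toList T₂)
  have hcmval : (Finset.univ : Finset (Fin L.length)).centerMass (fun _ => (1 : ℝ)) z
      = fun i => (α i : ℝ) := by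
    funext i
    simp only [Finset.centerMass, Finset.sum_const, Finset.card_univ, Fintype.card_fin,
      nsmul_eq_mul, mul_one, one_smul, Pi.smul_apply, smul_eq_mul, Finset.sum_apply]
    have h2 : ∑ j : Fin L.length, z j i = ((q * α i : ℕ) : ℝ) := by
      rw [← hsum₂ i, ← msum_apply]
      have h3 : (T₂.sum) i = (∑ j : Fin L.length, L.get j) i := by rw [hgs]
      rw [h3, Finset.sum_apply]
      push_cast
      rfl
    rw [h2, hLlen]
    push_cast
    rw [inv_mul_eq_div, mul_comm]
    rw [mul_div_assoc, div_self (by exact_mod_cast hqpos.ne' : (q:ℝ) ≠ 0), mul_one]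
  rw [hcmval] at hcm
  exact hcm

/-- If rational vectors, linearly independent over ℝ, represent a rational vector with real
coefficients, then those coefficients are rational. -/
lemma rat_coeff {ι : Type} [Fintype ι] (v : ι → Fin n → ℚ) (b : Fin n → ℚ)
    (hli : LinearIndependent ℝ fun j => fun i => ((v j i : ℝ))) (c : ι → ℝ)
    (hsum : (∑ j, c j • fun i => ((v j i : ℝ))) = fun i => (b i : ℝ)) :
    ∀ j, ∃ d : ℚ, c j = (d : ℝ) := by
  classical
  by_cases hb : b ∈ Submodule.span ℚ (Set.range v)
  · obtain ⟨d, hd⟩ := (Submodule.mem_span_range_iff_exists_fun ℚ).1 hb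
    have hdr : (∑ j, (d j : ℝ) • fun i => ((v j i : ℝ))) = fun i => (b i : ℝ) := by
      funext i
      rw [Finset.sum_apply]
      have h1 := congrFun hd i
      rw [Finset.sum_apply] at h1
      simp only [Pi.smul_apply, smul_eq_mul] at h1 ⊢
      exact_mod_cast congrArg (fun x : ℚ => (x : ℝ)) h1
    have h0 : (∑ j, (c j - (d j : ℝ)) • fun i => ((v j i : ℝ))) = 0 := by
      simp only [sub_smul, Finset.sum_sub_distrib, hsum, hdr, sub_self]
    intro j
    exact ⟨d j, sub_eq_zero.1 (Fintype.linearIndependent_iff.1 hli _ h0 j)⟩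
  · exfalso
    obtain ⟨f, hfb, hfW⟩ := Submodule.exists_dual_map_eq_bot_of_notMem hb inferInstance
    set a : Fin n → ℚ := fun i => f fun j' => if i = j' then 1 else 0 with ha
    have hf : ∀ x : Fin n → ℚ, f x = ∑ i, x i * a i := by
      intro x
      rw [LinearMap.pi_apply_eq_sum_univ f x]
      simp [smul_eq_mul, ha]
    set F : (Fin n → ℝ) →ₗ[ℝ] ℝ := ∑ i, (a i : ℝ) • (LinearMap.proj i) with hF
    have hFapp : ∀ x : Fin n → ℝ, F x = ∑ i, x i * (a i : ℝ) := by
      intro x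
      simp [hF, LinearMap.sum_apply, LinearMap.smul_apply, LinearMap.proj_apply, mul_comm]
    have hFv : ∀ j, F (fun i => ((v j i : ℝ))) = 0 := by
      intro j
      have hvW : v j ∈ Submodule.span ℚ (Set.range v) := Submodule.subset_span ⟨j, rfl⟩
      have : f (v j) = 0 := by
        have := Submodule.mem_map_of_mem (f := f) hvW
        rw [hfW] at this
        exact (Submodule.mem_bot ℚ).1 this
      rw [hFapp]
      have := congrArg (fun x : ℚ => (x : ℝ)) ((hf (v j)).symm.trans this)
      push_cast at this ⊢
      convert this using 2
    have hFb : F (fun i => ((b i : ℝ))) = (f b : ℝ) := by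
      rw [hFapp, hf b]
      push_cast
      rfl
    have h0 : F (fun i => ((b i : ℝ))) = 0 := by
      rw [← hsum, map_sum]
      simp only [map_smul, smul_eq_mul]
      rw [Finset.sum_congr rfl fun j _ => by rw [hFv j]]
      simp
    rw [hFb] at h0
    exact hfb (by exact_mod_cast h0)

lemma exists_nat_mul (x : ℚ) (hx : 0 ≤ x) (N : ℕ) (hd : x.den ∣ N) :
    ∃ m : ℕ, (m : ℚ) = x * N := by
  obtain ⟨k, hk⟩ := hd
  refine ⟨x.num.toNat * k, ?_⟩
  have hnum : (0:ℤ) ≤ x.num := Rat.num_nonneg.2 hx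
  have h1 : x * N = x * x.den * k := by rw [hk]; push_cast; ring
  rw [h1, Rat.mul_den_eq_num]
  have h2 : ((x.num.toNat : ℕ) : ℚ) = (x.num : ℚ) := by
    exact_mod_cast congrArg (fun y : ℤ => (y : ℚ)) (Int.toNat_of_nonneg hnum)
  push_cast
  rw [h2]

lemma card_finsum {ι : Type*} (s : Finset ι) (f : ι → Multiset (Fin n → ℕ)) :
    Multiset.card (∑ j ∈ s, f j) = ∑ j ∈ s, Multiset.card (f j) := by
  classical
  induction s using Finset.induction with
  | empty => simp
  | insert _ _ h ih => simp [Finset.sum_insert h, ih]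

lemma sum_finsum {ι : Type*} (s : Finset ι) (f : ι → Multiset ℕ) :
    (∑ j ∈ s, f j).sum = ∑ j ∈ s, (f j).sum := by
  classical
  induction s using Finset.induction with
  | empty => simp
  | insert _ _ h ih => simp [Finset.sum_insert h, ih]

lemma map_finsum {ι : Type*} (s : Finset ι) (f : ι → Multiset (Fin n → ℕ)) (g : (Fin n → ℕ) → ℕ) :
    (∑ j ∈ s, f j).map g = ∑ j ∈ s, (f j).map g := by
  classical
  induction s using Finset.induction with
  | empty => simp
  | insert _ _ h ih => simp [Finset.sum_insert h, ih]

lemma conv_to_witness (G : Set (Fin n → ℕ)) (M : Ideal (MPoly n))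
    (hmm : ∀ β : Fin n → ℕ, monom β ∈ M → ∃ γ ∈ G, ∀ i, γ i ≤ β i)
    (α : Fin n → ℕ)
    (h : (fun i => (α i : ℝ)) ∈
      convexHull ℝ {x : Fin n → ℝ | ∃ β : Fin n → ℕ, monom β ∈ M ∧ x = fun i => (β i : ℝ)}) :
    Witness G α := by
  classical
  obtain ⟨ι, hft, z, w, hrange, haff, hwpos, hwsum, hzsum⟩ :=
    eq_pos_convex_span_of_mem_convexHull h
  letI := hft
  have hne : Nonempty ι := by
    by_contra hempty
    rw [not_nonempty_iff] at hempty
    rw [Finset.univ_eq_empty, Finset.sum_empty] at hwsum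
    exact one_ne_zero hwsum.symm
  obtain ⟨j₀⟩ := hne
  have hmem : ∀ j, ∃ β : Fin n → ℕ, monom β ∈ M ∧ z j = fun i => (β i : ℝ) := fun j =>
    hrange (Set.mem_range_self j)
  choose β hβM hzeq using hmem
  choose γ hγG hγle using fun j => hmm (β j) (hβM j)
  set v : {x : ι // x ≠ j₀} → Fin n → ℚ :=
    fun j => fun i => (β j.1 i : ℚ) - (β j₀ i : ℚ) with hv
  set b : Fin n → ℚ := fun i => (α i : ℚ) - (β j₀ i : ℚ) with hb
  have hcast : ∀ j : {x : ι // x ≠ j₀}, (fun i => ((v j i : ℝ))) = z j.1 - z j₀ := by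
    intro j
    funext i
    simp only [hv, hzeq, Pi.sub_apply]
    push_cast
    ring
  have hli : LinearIndependent ℝ fun j : {x : ι // x ≠ j₀} => fun i => ((v j i : ℝ)) := by
    have h2 := (affineIndependent_iff_linearIndependent_vsub ℝ z j₀).1 haff
    have h3 : (fun j : {x : ι // x ≠ j₀} => fun i => ((v j i : ℝ)))
        = fun j : {x : ι // x ≠ j₀} => z j.1 -ᵥ z j₀ :=
      funext fun j => (hcast j).trans (vsub_eq_sub (z j.1) (z j₀)).symm
    rw [h3]
    exact h2
  have hsubty : ∀ (f : ι → Fin n → ℝ),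
      (∑ j : {x : ι // x ≠ j₀}, f j.1) = ∑ j ∈ Finset.univ.erase j₀, f j := by
    intro f
    rw [Finset.sum_subtype (p := fun x => x ≠ j₀) (Finset.univ.erase j₀) (fun x => by simp [Finset.mem_erase]) f]
  have hsum : (∑ j : {x : ι // x ≠ j₀}, w j.1 • fun i => ((v j i : ℝ)))
      = fun i => (b i : ℝ) := by
    have hz0 : (fun i => ((b i : ℝ))) = (fun i => (α i : ℝ)) - z j₀ := by
      funext i
      simp only [hb, hzeq, Pi.sub_apply]
      push_cast
      ring
    rw [hz0]
    have e1 : (∑ j : {x : ι // x ≠ j₀}, w j.1 • fun i => ((v j i : ℝ)))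
        = ∑ j : {x : ι // x ≠ j₀}, w j.1 • (z j.1 - z j₀) := by
      apply Finset.sum_congr rfl
      intro j _
      rw [hcast]
    rw [e1, hsubty fun j => w j • (z j - z j₀),
      Finset.sum_erase _ (by rw [sub_self, smul_zero])]
    have e2 : ∑ j, w j • (z j - z j₀) = (∑ j, w j • z j) - (∑ j, w j) • z j₀ := by
      rw [Finset.sum_smul]
      rw [← Finset.sum_sub_distrib]
      apply Finset.sum_congr rfl
      intro j _
      rw [smul_sub]
    rw [e2, hzsum, hwsum, one_smul]
  choose dsub hdsub using rat_coeff v b hli (fun j => w j.1) hsum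
  set d : ι → ℚ := fun j =>
    if hj : j = j₀ then 1 - ∑ j' : {x : ι // x ≠ j₀}, dsub j' else dsub ⟨j, hj⟩ with hdd
  have hd : ∀ j, w j = (d j : ℝ) := by
    intro j
    by_cases hj : j = j₀
    · subst hj
      have hw0 : w j + ∑ j' ∈ Finset.univ.erase j, w j' = 1 := by
        rw [Finset.add_sum_erase _ w (Finset.mem_univ j)]
        exact hwsum
      have hsub2 : (∑ j' : {x : ι // x ≠ j}, w j'.1) = ∑ j' ∈ Finset.univ.erase j, w j' := by
        rw [Finset.sum_subtype (p := fun x => x ≠ j) (Finset.univ.erase j) (fun x => by simp [Finset.mem_erase]) w]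
      simp only [hdd, dif_pos]
      push_cast
      rw [← hsub2] at hw0
      have : ∑ j' : {x : ι // x ≠ j}, (dsub j' : ℝ) = ∑ j' : {x : ι // x ≠ j}, w j'.1 := by
        apply Finset.sum_congr rfl
        intro j' _
        rw [hdsub]
      rw [this]
      linarith
    · simp only [hdd, dif_neg hj]
      exact hdsub ⟨j, hj⟩
  have hdpos : ∀ j, 0 < d j := by
    intro j
    have := hwpos j
    rw [hd j] at this
    exact_mod_cast this
  have hdsum : ∑ j, d j = 1 := by
    have : ((∑ j, d j : ℚ) : ℝ) = 1 := by
      push_cast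
      rw [← hwsum]
      apply Finset.sum_congr rfl
      intro j _
      exact (hd j).symm
    exact_mod_cast this
  have hptw : ∀ i, ∑ j, (d j : ℝ) * (β j i : ℝ) = (α i : ℝ) := by
    intro i
    have h5 := congrFun hzsum i
    rw [Finset.sum_apply] at h5
    simp only [Pi.smul_apply, smul_eq_mul, hzeq] at h5
    rw [← h5]
    apply Finset.sum_congr rfl
    intro j _
    rw [hd j]
  set N : ℕ := ∏ j, (d j).den with hN
  have hNpos : 0 < N := Finset.prod_pos fun j _ => (d j).pos
  choose m hmv using fun j => exists_nat_mul (d j) (hdpos j).le N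
    (Finset.dvd_prod_of_mem _ (Finset.mem_univ j))
  have hmr : ∀ j, (m j : ℝ) = (d j : ℝ) * N := by
    intro j
    exact_mod_cast congrArg (fun x : ℚ => (x : ℝ)) (hmv j)
  have hmsum : ∑ j, m j = N := by
    have : ((∑ j, m j : ℕ) : ℚ) = N := by
      push_cast [hmv]
      rw [← Finset.sum_mul, hdsum, one_mul]
    exact_mod_cast this
  have hkey : ∀ i, ∑ j, m j * β j i = N * α i := by
    intro i
    have hr : ((∑ j, m j * β j i : ℕ) : ℝ) = ((N * α i : ℕ) : ℝ) := by
      push_cast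
      calc ∑ j, (m j : ℝ) * (β j i : ℝ) = ∑ j, (N : ℝ) * ((d j : ℝ) * (β j i : ℝ)) := by
            apply Finset.sum_congr rfl
            intro j _
            rw [hmr j]
            ring
        _ = (N : ℝ) * ∑ j, (d j : ℝ) * (β j i : ℝ) := by rw [← Finset.mul_sum]
        _ = (N : ℝ) * (α i : ℝ) := by rw [hptw i]
    exact_mod_cast hr
  refine ⟨∑ j, Multiset.replicate (m j) (γ j), ?_, ?_, ?_⟩
  · intro h0
    have := card_finsum Finset.univ fun j => Multiset.replicate (m j) (γ j)
    rw [h0] at this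
    simp only [Multiset.card_zero, Multiset.card_replicate] at this
    rw [hmsum] at this
    omega
  · intro δ hδ
    obtain ⟨j, _, hj⟩ := Multiset.mem_sum.1 hδ
    rw [Multiset.eq_of_mem_replicate hj]
    exact hγG j
  · intro i
    rw [map_finsum, card_finsum]
    simp only [Multiset.map_replicate, Multiset.card_replicate, hmsum]
    rw [sum_finsum]
    simp only [Multiset.sum_replicate, smul_eq_mul]
    calc ∑ j, m j * γ j i ≤ ∑ j, m j * β j i :=
          Finset.sum_le_sum fun j _ => Nat.mul_le_mul_left _ (hγle j i)
      _ = N * α i := hkey i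
    -- then rewrite sum over map
end Conv

end NPaux

/-- A monomial z^α belongs to the integral closure of a monomial ideal M iff its
exponent vector lies in the Newton polyhedron of M, i.e. the convex hull of the
exponent vectors of monomials in M. -/
theorem stmt0 (n : ℕ) (G : Set (Fin n → ℕ)) (M : Ideal (MPoly n))
    (hM : M = Ideal.span ((fun β => monom β) '' G)) (α : Fin n → ℕ) :
    memIntClosure M (monom α) ↔
      (fun i => (α i : ℝ)) ∈
        convexHull ℝ {x : Fin n → ℝ | ∃ β : Fin n → ℕ, monom β ∈ M ∧ x = fun i => (β i : ℝ)} := by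
  constructor
  · intro h
    obtain ⟨T, h1, h2, h3⟩ := NPaux.alg_to_witness G M hM α h
    exact NPaux.witness_to_conv G M
      (fun β hb => by rw [hM]; exact (NPaux.monom_mem_iff β).2 hb) α T h1 h2 h3
  · intro h
    apply NPaux.witness_to_alg G M hM α
    exact NPaux.conv_to_witness G M
      (fun β hb => (NPaux.monom_mem_iff β).1 (by rw [← hM]; exact hb)) α h
end
end

section
/- Let β ∈ ℕ^n with each β_i ≥ 1 and let ρ_j = ∏_{k≠j} β_k. Then a monomial z^α lies in the integral closure of the ideal m^β = (z_1^{β_1},…,z_n^{β_n}) if and only if ρ·α ≥ β_1β_2⋯β_n, i.e., if and only if Σ_j α_j/β_j ≥ 1. -/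
open MvPolynomial

noncomputable section

def good {n : ℕ} (β : Fin n → ℕ) (m : ℕ) (γ : Fin n →₀ ℕ) : Prop :=
  ∃ c : Fin n → ℕ, ∑ i, c i = m ∧ ∀ i, c i * β i ≤ γ i

lemma good_mono {n : ℕ} {β : Fin n → ℕ} {m : ℕ} {γ γ' : Fin n →₀ ℕ}
    (h : good β m γ) (hle : ∀ i, γ i ≤ γ' i) : good β m γ' := by
  obtain ⟨c, hc, hb⟩ := h
  exact ⟨c, hc, fun i => (hb i).trans (hle i)⟩

lemma good_add {n : ℕ} {β : Fin n → ℕ} {a b : ℕ} {γ₁ γ₂ : Fin n →₀ ℕ}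
    (h₁ : good β a γ₁) (h₂ : good β b γ₂) : good β (a + b) (γ₁ + γ₂) := by
  obtain ⟨c₁, hc₁, hb₁⟩ := h₁
  obtain ⟨c₂, hc₂, hb₂⟩ := h₂
  refine ⟨fun i => c₁ i + c₂ i, by rw [Finset.sum_add_distrib, hc₁, hc₂], fun i => ?_⟩
  have := add_le_add (hb₁ i) (hb₂ i)
  simpa [add_mul] using this

lemma sum_single_eq {n : ℕ} (f : Fin n → ℕ) :
    (∑ i, Finsupp.single i (f i)) = Finsupp.equivFunOnFinite.symm f := by
  ext j
  rw [Finset.sum_apply']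
  simp [Finsupp.single_apply, Finsupp.coe_equivFunOnFinite_symm]

lemma prod_X_pow_eq {n : ℕ} (f : Fin n → ℕ) :
    (∏ i, (X i : MPoly n) ^ f i) = monomial (Finsupp.equivFunOnFinite.symm f) 1 := by
  have key : ∀ (s : Finset (Fin n)),
      (∏ i ∈ s, monomial (Finsupp.single i (f i)) (1 : ℂ))
        = monomial (∑ i ∈ s, Finsupp.single i (f i)) 1 := by
    intro s
    induction s using Finset.induction_on with
    | empty => simp
    | insert _ _ hx ih =>
        rw [Finset.prod_insert hx, Finset.sum_insert hx, ih, monomial_mul, one_mul]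
  calc (∏ i, (X i : MPoly n) ^ f i)
      = ∏ i, monomial (Finsupp.single i (f i)) (1 : ℂ) := by simp [X_pow_eq_monomial]
    _ = monomial (∑ i, Finsupp.single i (f i)) 1 := key Finset.univ
    _ = monomial (Finsupp.equivFunOnFinite.symm f) 1 := by rw [sum_single_eq]

lemma monom_eq {n : ℕ} (α : Fin n → ℕ) :
    monom α = monomial (Finsupp.equivFunOnFinite.symm α) (1 : ℂ) := prod_X_pow_eq α

lemma mem_span_support {n : ℕ} (β : Fin n → ℕ) (b : MPoly n)
    (hb : b ∈ Ideal.span (Set.range fun i => (X i : MPoly n) ^ β i)) :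
    ∀ γ ∈ b.support, good β 1 γ := by
  induction hb using Submodule.span_induction with
  | mem x hx =>
      obtain ⟨i, rfl⟩ := hx
      intro γ hγ
      simp only [X_pow_eq_monomial, support_monomial, one_ne_zero, if_false,
        Finset.mem_singleton] at hγ
      subst hγ
      refine ⟨fun j => if j = i then 1 else 0, by simp, fun j => ?_⟩
      by_cases hji : j = i <;> simp [hji, Finsupp.single_apply]
  | zero => intro γ hγ; simp at hγ
  | add x y _ _ hx hy =>
      intro γ hγ
      rcases Finset.mem_union.1 (support_add hγ) with h | h
      exacts [hx γ h, hy γ h]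
  | smul r x _ hx =>
      intro γ hγ
      have := support_mul r x hγ
      rw [Finset.mem_add] at this
      obtain ⟨γ₁, hγ₁, γ₂, hγ₂, rfl⟩ := this
      exact good_mono (hx γ₂ hγ₂) (fun i => by simp)

lemma mem_pow_support {n : ℕ} (β : Fin n → ℕ) (m : ℕ) (p : MPoly n)
    (hp : p ∈ (Ideal.span (Set.range fun i => (X i : MPoly n) ^ β i)) ^ m) :
    ∀ γ ∈ p.support, good β m γ := by
  induction m generalizing p with
  | zero => intro γ _; exact ⟨0, by simp, by simp⟩
  | succ m ih =>
    rw [pow_succ] at hp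
    refine Submodule.mul_induction_on hp ?_ ?_
    · intro a ha b hb γ hγ
      have := support_mul a b hγ
      rw [Finset.mem_add] at this
      obtain ⟨γ₁, hγ₁, γ₂, hγ₂, rfl⟩ := this
      exact good_add (ih a ha γ₁ hγ₁) (mem_span_support β b hb γ₂ hγ₂)
    · intro x y hx hy γ hγ
      rcases Finset.mem_union.1 (support_add hγ) with h | h
      exacts [hx γ h, hy γ h]

lemma monomial_mem_pow {n : ℕ} (β : Fin n → ℕ) (c : Fin n → ℕ) (γ : Fin n →₀ ℕ)
    (h : ∀ i, c i * β i ≤ γ i) :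
    monomial γ (1 : ℂ) ∈
      (Ideal.span (Set.range fun i => (X i : MPoly n) ^ β i)) ^ (∑ i, c i) := by
  set I : Ideal (MPoly n) := Ideal.span (Set.range fun i => (X i : MPoly n) ^ β i)
  set s : Fin n →₀ ℕ := Finsupp.equivFunOnFinite.symm (fun i => c i * β i) with hs
  have hdecomp : monomial γ (1 : ℂ)
      = (∏ i, ((X i : MPoly n) ^ β i) ^ c i) * monomial (γ - s) 1 := by
    have h1 : (∏ i, ((X i : MPoly n) ^ β i) ^ c i)
        = ∏ i, (X i : MPoly n) ^ (c i * β i) := by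
      refine Finset.prod_congr rfl fun i _ => ?_
      rw [← pow_mul, mul_comm]
    have hsplit : s + (γ - s) = γ := by
      ext j
      have := h j
      simp only [Finsupp.add_apply, Finsupp.tsub_apply, hs,
        Finsupp.coe_equivFunOnFinite_symm]
      omega
    rw [h1, prod_X_pow_eq, monomial_mul, one_mul, hsplit]
  rw [hdecomp]
  refine Ideal.mul_mem_right _ _ ?_
  rw [← Finset.prod_pow_eq_pow_sum]
  refine Ideal.prod_mem_prod fun i _ => ?_
  have hmem : (X i : MPoly n) ^ β i ∈ Set.range fun i => (X i : MPoly n) ^ β i := ⟨i, rfl⟩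
  exact Ideal.pow_mem_pow (Ideal.subset_span hmem) _

/-- For β with positive entries and ρ_j = ∏_{i ≠ j} β_i, a monomial z^α lies in
the integral closure of m^β = (z_1^{β_1},…,z_n^{β_n}) iff ρ·α ≥ β_1⋯β_n,
i.e. iff Σ_j α_j/β_j ≥ 1. -/
theorem stmt3 (n : ℕ) (β : Fin n → ℕ) (hβ : ∀ i, 1 ≤ β i)
    (ρ : Fin n → ℕ) (hρ : ∀ j, ρ j = ∏ k ∈ Finset.univ.erase j, β k)
    (α : Fin n → ℕ) :
    (memIntClosure (Ideal.span (Set.range fun i => (X i : MPoly n) ^ β i)) (monom α) ↔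
      ∏ j, β j ≤ ∑ j, ρ j * α j) ∧
    (memIntClosure (Ideal.span (Set.range fun i => (X i : MPoly n) ^ β i)) (monom α) ↔
      (1 : ℝ) ≤ ∑ j, (α j : ℝ) / (β j : ℝ)) := by
  set I : Ideal (MPoly n) := Ideal.span (Set.range fun i => (X i : MPoly n) ^ β i) with hI
  set B : ℕ := ∏ j, β j with hB
  have hρβ : ∀ j, ρ j * β j = B := fun j => by
    rw [hρ j]; exact Finset.prod_erase_mul _ _ (Finset.mem_univ j)
  have hBpos : 0 < B := Finset.prod_pos fun j _ => hβ j
  set fα : Fin n →₀ ℕ := Finsupp.equivFunOnFinite.symm α with hfα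
  have hfa : ∀ j, fα j = α j := fun j => congrFun (Finsupp.coe_equivFunOnFinite_symm α) j
  have hmonom : ∀ m : ℕ, (monom α) ^ m = monomial (m • fα) (1 : ℂ) := by
    intro m
    rw [monom_eq, monomial_pow, one_pow]
  have main : memIntClosure I (monom α) ↔ B ≤ ∑ j, ρ j * α j := by
    constructor
    · rintro ⟨q, hq, h, hmem, heq⟩
      have hco := congrArg (coeff (q • fα)) heq
      rw [coeff_add, coeff_zero, hmonom, coeff_monomial, if_pos rfl] at hco
      have hex : ∃ k : Fin q, coeff (q • fα) (h k * (monom α) ^ (q - 1 - k.1)) ≠ 0 := by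
        by_contra hall
        push_neg at hall
        rw [coeff_sum, Finset.sum_eq_zero (fun k _ => hall k)] at hco
        norm_num at hco
      obtain ⟨k, hk⟩ := hex
      have hkq : k.1 < q := k.2
      rw [hmonom, coeff_mul_monomial'] at hk
      have hle : (q - 1 - k.1) • fα ≤ q • fα := by
        intro j
        simp only [Finsupp.smul_apply, smul_eq_mul]
        exact Nat.mul_le_mul_right _ (by omega)
      rw [if_pos hle] at hk
      have hsub : q • fα - (q - 1 - k.1) • fα = (k.1 + 1) • fα := by
        ext j
        simp only [Finsupp.tsub_apply, Finsupp.smul_apply, smul_eq_mul]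
        have h2 : q - (q - 1 - k.1) = k.1 + 1 := by omega
        rw [← Nat.sub_mul, h2]
      rw [hsub, mul_one] at hk
      obtain ⟨c, hc, hb⟩ := mem_pow_support β (k.1 + 1) (h k) (hmem k) _ (mem_support_iff.2 hk)
      have key : ∀ i, c i * B ≤ (k.1 + 1) * (ρ i * α i) := by
        intro i
        have h1 := hb i
        simp only [Finsupp.smul_apply, smul_eq_mul, hfa] at h1
        calc c i * B = ρ i * (c i * β i) := by rw [← hρβ i]; ring
          _ ≤ ρ i * ((k.1 + 1) * α i) := Nat.mul_le_mul_left _ h1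
          _ = (k.1 + 1) * (ρ i * α i) := by ring
      have hsum : (k.1 + 1) * B ≤ (k.1 + 1) * ∑ j, ρ j * α j := by
        calc (k.1 + 1) * B = (∑ i, c i) * B := by rw [hc]
          _ = ∑ i, c i * B := by rw [Finset.sum_mul]
          _ ≤ ∑ i, (k.1 + 1) * (ρ i * α i) := Finset.sum_le_sum fun i _ => key i
          _ = (k.1 + 1) * ∑ j, ρ j * α j := by rw [Finset.mul_sum]
      exact Nat.le_of_mul_le_mul_left hsum (Nat.succ_pos _)
    · intro hge
      unfold memIntClosure
      refine ⟨B, hBpos,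
        fun k => if k = (⟨B - 1, by omega⟩ : Fin B) then -((monom α) ^ B) else 0,
        fun k => ?_, ?_⟩
      · dsimp only
        by_cases hk : k = (⟨B - 1, by omega⟩ : Fin B)
        · rw [if_pos hk]
          refine neg_mem ?_
          have hmem : (monom α) ^ B ∈ I ^ (∑ i, ρ i * α i) := by
            rw [hmonom]
            exact monomial_mem_pow β (fun i => ρ i * α i) (B • fα) (fun i => by
              simp only [Finsupp.smul_apply, smul_eq_mul, hfa]
              have h2 : ρ i * α i * β i = B * α i := by rw [← hρβ i]; ring
              omega)
          refine Ideal.pow_le_pow_right ?_ hmem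
          have := k.2
          omega
        · rw [if_neg hk]; exact zero_mem _
      · rw [Finset.sum_eq_single (⟨B - 1, by omega⟩ : Fin B)]
        · dsimp only
          rw [if_pos rfl]
          have h0 : B - 1 - (B - 1) = 0 := by omega
          rw [h0, pow_zero, mul_one]
          ring
        · intro k _ hk; dsimp only; rw [if_neg hk, zero_mul]
        · intro h; exact absurd (Finset.mem_univ _) h
  have hterm : ∀ j, (α j : ℝ) / (β j : ℝ) = ((ρ j : ℝ) * (α j : ℝ)) / (B : ℝ) := by
    intro j
    have hρpos : 0 < ρ j := by rw [hρ j]; exact Finset.prod_pos fun i _ => hβ i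
    have hBj : (B : ℝ) = (ρ j : ℝ) * (β j : ℝ) := by
      rw [← hρβ j]; push_cast; ring
    rw [hBj, mul_div_mul_left _ _ (show (ρ j : ℝ) ≠ 0 by exact_mod_cast hρpos.ne')]
  have heq : (∑ j, (α j : ℝ) / (β j : ℝ)) = ((∑ j, ρ j * α j : ℕ) : ℝ) / (B : ℝ) := by
    rw [Finset.sum_congr rfl (fun j _ => hterm j), ← Finset.sum_div]
    push_cast
    ring
  refine ⟨main, main.trans ?_⟩
  rw [heq, one_le_div (show (0 : ℝ) < B by exact_mod_cast hBpos), Nat.cast_le]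
end
end
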